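/- arXiv:2303.11452 — 3 statements merged into one kernel-verified Lean document; each statement's English description precedes it below -/
import Mathlib

section
/- Let g : V → ℝ and define g_+(v) = max(g(v), 0) and g_−(v) = max(−g(v), 0). If g_+ and g_− are both not identically zero, then Q_L(g)/Q_D(g) ≥ min{ Q_L(g_+)/Q_D(g_+), Q_L(g_−)/Q_D(g_−) }. -/
/-!
Since `g⁺ g⁻ = 0`, the degree form splits exactly, `Q_D(g) = Q_D(g⁺) + Q_D(g⁻)`, while
edge by edge `(g u - g v)² ≥ (g⁺ u - g⁺ v)² + (g⁻ u - g⁻ v)²` (the cross terms `g⁺ u g⁻ v`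
are nonnegative), so `Q_L(g) ≥ Q_L(g⁺) + Q_L(g⁻)`.
The quotient `Q_L(g) / Q_D(g)` therefore dominates the mediant of the two part quotients,
which is at least their minimum.
-/

open Finset

section PosNegPart

variable {α : Type*} [CommRing α] [LinearOrder α] [IsStrictOrderedRing α]

lemma posPart_mul_negPart_eq_zero (a : α) : a⁺ * a⁻ = 0 := by
  rcases le_total a 0 with h | h
  · rw [posPart_eq_zero.2 h, zero_mul]
  · rw [negPart_eq_zero.2 h, mul_zero]

lemma sq_eq_sq_posPart_add_sq_negPart (a : α) : a ^ 2 = a⁺ ^ 2 + a⁻ ^ 2 := by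
  linear_combination
    (a⁺ - a⁻ + a) * (posPart_sub_negPart a).symm - 2 * posPart_mul_negPart_eq_zero a

lemma sq_posPart_sub_add_sq_negPart_sub_le (a b : α) :
    (a⁺ - b⁺) ^ 2 + (a⁻ - b⁻) ^ 2 ≤ (a - b) ^ 2 := by
  have hcross : 0 ≤ a⁺ * b⁻ + b⁺ * a⁻ :=
    add_nonneg (mul_nonneg (posPart_nonneg a) (negPart_nonneg b))
      (mul_nonneg (posPart_nonneg b) (negPart_nonneg a))
  nth_rw 3 [← posPart_sub_negPart a, ← posPart_sub_negPart b]
  linear_combination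
    2 * hcross + 2 * posPart_mul_negPart_eq_zero a + 2 * posPart_mul_negPart_eq_zero b

end PosNegPart

lemma min_div_le_add_div_add {α : Type*} [Field α] [LinearOrder α] [IsStrictOrderedRing α]
    {a b c d : α} (hb : 0 < b) (hd : 0 < d) : min (a / b) (c / d) ≤ (a + c) / (b + d) := by
  have hab : min (a / b) (c / d) * b ≤ a := (le_div_iff₀ hb).1 (min_le_left _ _)
  have hcd : min (a / b) (c / d) * d ≤ c := (le_div_iff₀ hd).1 (min_le_right _ _)
  rw [le_div_iff₀ (add_pos hb hd)]
  linarith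

section QuadraticForms

variable {V α : Type*} [Fintype V] [Field α] [LinearOrder α] [IsStrictOrderedRing α]

def dirichletForm (w : V → V → α) (x : V → α) : α :=
  (1 / 2) * ∑ u, ∑ v, w u v * (x u - x v) ^ 2

def degreeForm (d : V → α) (x : V → α) : α :=
  ∑ v, d v * x v ^ 2

lemma dirichletForm_posPart_add_negPart_le {w : V → V → α} (hw : ∀ u v, 0 ≤ w u v)
    (x : V → α) : dirichletForm w x⁺ + dirichletForm w x⁻ ≤ dirichletForm w x := by
  simp only [dirichletForm, ← mul_add, ← sum_add_distrib]
  gcongr with u _ v _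
  · exact hw u v
  · exact sq_posPart_sub_add_sq_negPart_sub_le (x u) (x v)

lemma degreeForm_eq_posPart_add_negPart (d : V → α) (x : V → α) :
    degreeForm d x = degreeForm d x⁺ + degreeForm d x⁻ := by
  simp only [degreeForm, ← sum_add_distrib, ← mul_add, Pi.posPart_apply, Pi.negPart_apply,
    ← sq_eq_sq_posPart_add_sq_negPart]

lemma degreeForm_pos {d : V → α} (hd : ∀ v, 0 < d v) {x : V → α} (hx : x ≠ 0) :
    0 < degreeForm d x := by
  obtain ⟨v, hv⟩ := Function.ne_iff.1 hx
  exact sum_pos' (fun u _ => mul_nonneg (hd u).le (sq_nonneg _))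
    ⟨v, mem_univ v, mul_pos (hd v) (sq_pos_of_ne_zero hv)⟩

end QuadraticForms

theorem rayleigh_min_pos_neg_parts_general {V : Type*} [Fintype V]
    (w : V → V → ℝ)
    (hw_nonneg : ∀ u v, 0 ≤ w u v)
    (d : V → ℝ)
    (hd_pos : ∀ v, 0 < d v)
    (QL QD : (V → ℝ) → ℝ)
    (hQL : ∀ x : V → ℝ, QL x = (1/2) * ∑ u, ∑ v, w u v * (x u - x v)^2)
    (hQD : ∀ x : V → ℝ, QD x = ∑ v, d v * x v ^ 2)
    (g : V → ℝ)
    (hgp : (fun v => max (g v) 0) ≠ (fun _ => (0:ℝ)))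
    (hgm : (fun v => max (-g v) 0) ≠ (fun _ => (0:ℝ))) :
    QL g / QD g ≥
      min (QL (fun v => max (g v) 0) / QD (fun v => max (g v) 0))
          (QL (fun v => max (-g v) 0) / QD (fun v => max (-g v) 0)) := by
  obtain rfl : QL = dirichletForm w := funext hQL
  obtain rfl : QD = degreeForm d := funext hQD
  change g⁺ ≠ 0 at hgp
  change g⁻ ≠ 0 at hgm
  change min (dirichletForm w g⁺ / degreeForm d g⁺) (dirichletForm w g⁻ / degreeForm d g⁻) ≤
    dirichletForm w g / degreeForm d g
  have hpos := degreeForm_pos hd_pos hgp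
  have hneg := degreeForm_pos hd_pos hgm
  calc _ ≤ (dirichletForm w g⁺ + dirichletForm w g⁻) / (degreeForm d g⁺ + degreeForm d g⁻) :=
        min_div_le_add_div_add hpos hneg
    _ ≤ dirichletForm w g / degreeForm d g := by
        rw [degreeForm_eq_posPart_add_negPart d g]
        gcongr
        exact dirichletForm_posPart_add_negPart_le hw_nonneg g

theorem rayleigh_min_pos_neg_parts {V : Type*} [Fintype V] [DecidableEq V] [Nonempty V]
    (w : V → V → ℝ)
    (hw_symm : ∀ u v, w u v = w v u)
    (hw_nonneg : ∀ u v, 0 ≤ w u v)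
    (hw_loop : ∀ v, w v v = 0)
    (d : V → ℝ) (hd : ∀ v, d v = ∑ u, w v u)
    (hd_pos : ∀ v, 0 < d v)
    (vol : Finset V → ℝ) (hvol : ∀ S : Finset V, vol S = ∑ v ∈ S, d v)
    (QL QD : (V → ℝ) → ℝ)
    (hQL : ∀ x : V → ℝ, QL x = (1/2) * ∑ u, ∑ v, w u v * (x u - x v)^2)
    (hQD : ∀ x : V → ℝ, QD x = ∑ v, d v * x v ^ 2)
    (g : V → ℝ)
    (hgp : (fun v => max (g v) 0) ≠ (fun _ => (0:ℝ)))
    (hgm : (fun v => max (-g v) 0) ≠ (fun _ => (0:ℝ))) :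
    QL g / QD g ≥
      min (QL (fun v => max (g v) 0) / QD (fun v => max (g v) 0))
          (QL (fun v => max (-g v) 0) / QD (fun v => max (-g v) 0)) :=
  rayleigh_min_pos_neg_parts_general w hw_nonneg d hd_pos QL QD hQL hQD g hgp hgm
end

section
/- Let f : V → ℝ be nonnegative and not identically zero. Then Q_L(f)/Q_D(f) ≥ ( (1/2)·Σ_{u,v∈V} w(u,v)·|f(u)² − f(v)²| )² / ( 2·Q_D(f)² ). -/
/-!
Write `|f u ² - f v ²| = |f u - f v| · |f u + f v|` and apply Cauchy–Schwarz to the weighted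
double sum: its square is at most `Σ w (f u - f v)² · Σ w (f u + f v)² = 2 Q_L(f) · Σ w (f u + f v)²`.
Since `(a + b)² ≤ 2 (a² + b²)` and `w` is symmetric, the second factor is at most `4 Q_D(f)`.
-/

open Finset

section WeightedGraph

variable {V : Type*} [Fintype V] {w : V → V → ℝ}

lemma sq_sum_sum_mul_abs_sq_sub_sq_le (hw : ∀ u v, 0 ≤ w u v) (f : V → ℝ) :
    (∑ u, ∑ v, w u v * |f u ^ 2 - f v ^ 2|) ^ 2 ≤
      (∑ u, ∑ v, w u v * (f u - f v) ^ 2) * ∑ u, ∑ v, w u v * (f u + f v) ^ 2 := by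
  simp only [← Fintype.sum_prod_type']
  refine sum_sq_le_sum_mul_sum_of_sq_le_mul _
    (fun p _ => mul_nonneg (hw _ _) (sq_nonneg _)) (fun p _ => mul_nonneg (hw _ _) (sq_nonneg _))
    fun p _ => le_of_eq ?_
  rw [mul_pow, sq_abs]
  ring

lemma sum_sum_mul_sq_add_sq_eq (hsymm : ∀ u v, w u v = w v u) (f : V → ℝ) :
    ∑ u, ∑ v, w u v * (f u ^ 2 + f v ^ 2) = 2 * ∑ v, (∑ u, w v u) * f v ^ 2 := by
  have hswap : ∑ u, ∑ v, w u v * f v ^ 2 = ∑ u, ∑ v, w u v * f u ^ 2 := by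
    rw [sum_comm]
    simp_rw [hsymm]
  simp only [mul_add, sum_add_distrib, hswap, sum_mul]
  ring

lemma sum_sum_mul_sq_add_le (hsymm : ∀ u v, w u v = w v u) (hw : ∀ u v, 0 ≤ w u v)
    (f : V → ℝ) :
    ∑ u, ∑ v, w u v * (f u + f v) ^ 2 ≤ 4 * ∑ v, (∑ u, w v u) * f v ^ 2 :=
  calc ∑ u, ∑ v, w u v * (f u + f v) ^ 2
      ≤ ∑ u, ∑ v, w u v * (2 * (f u ^ 2 + f v ^ 2)) := by
        gcongr with u _ v _
        · exact hw u v
        · exact add_sq_le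
    _ = 4 * ∑ v, (∑ u, w v u) * f v ^ 2 := by
        simp only [mul_left_comm _ (2 : ℝ), ← mul_sum, sum_sum_mul_sq_add_sq_eq hsymm]
        ring

end WeightedGraph

theorem rayleigh_cauchy_schwarz_lower_general {V : Type*} [Fintype V]
    (w : V → V → ℝ)
    (hw_symm : ∀ u v, w u v = w v u)
    (hw_nonneg : ∀ u v, 0 ≤ w u v)
    (d : V → ℝ) (hd : ∀ v, d v = ∑ u, w v u)
    (QL QD : (V → ℝ) → ℝ)
    (hQL : ∀ x : V → ℝ, QL x = (1/2) * ∑ u, ∑ v, w u v * (x u - x v)^2)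
    (hQD : ∀ x : V → ℝ, QD x = ∑ v, d v * x v ^ 2)
    (f : V → ℝ) :
    QL f / QD f ≥
      ((1/2) * ∑ u, ∑ v, w u v * |f u ^ 2 - f v ^ 2|)^2 / (2 * (QD f)^2) := by
  set S := ∑ u, ∑ v, w u v * |f u ^ 2 - f v ^ 2|
  have hQL2 : ∑ u, ∑ v, w u v * (f u - f v) ^ 2 = 2 * QL f := by rw [hQL]; ring
  have hQL_nonneg : 0 ≤ 2 * QL f :=
    hQL2 ▸ sum_nonneg fun u _ => sum_nonneg fun v _ => mul_nonneg (hw_nonneg u v) (sq_nonneg _)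
  have hQD4 : 4 * ∑ v, (∑ u, w v u) * f v ^ 2 = 4 * QD f := by simp_rw [hQD, hd]
  have hS : S ^ 2 ≤ 2 * QL f * (4 * QD f) :=
    calc S ^ 2 ≤ 2 * QL f * ∑ u, ∑ v, w u v * (f u + f v) ^ 2 :=
          hQL2 ▸ sq_sum_sum_mul_abs_sq_sub_sq_le hw_nonneg f
      _ ≤ 2 * QL f * (4 * QD f) :=
          mul_le_mul_of_nonneg_left (hQD4 ▸ sum_sum_mul_sq_add_le hw_symm hw_nonneg f) hQL_nonneg
  rw [ge_iff_le]
  calc ((1/2) * S) ^ 2 / (2 * QD f ^ 2) = S ^ 2 / (8 * QD f ^ 2) := by ring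
    _ ≤ 2 * QL f * (4 * QD f) / (8 * QD f ^ 2) := by gcongr
    _ = QL f / QD f := by
        -- if `Q_D(f) = 0`, both sides are `0` because `x / 0 = 0`
        rcases eq_or_ne (QD f) 0 with h | h
        · simp [h]
        · field_simp
          ring

theorem rayleigh_cauchy_schwarz_lower {V : Type*} [Fintype V] [DecidableEq V] [Nonempty V]
    (w : V → V → ℝ)
    (hw_symm : ∀ u v, w u v = w v u)
    (hw_nonneg : ∀ u v, 0 ≤ w u v)
    (hw_loop : ∀ v, w v v = 0)
    (d : V → ℝ) (hd : ∀ v, d v = ∑ u, w v u)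
    (hd_pos : ∀ v, 0 < d v)
    (vol : Finset V → ℝ) (hvol : ∀ S : Finset V, vol S = ∑ v ∈ S, d v)
    (QL QD : (V → ℝ) → ℝ)
    (hQL : ∀ x : V → ℝ, QL x = (1/2) * ∑ u, ∑ v, w u v * (x u - x v)^2)
    (hQD : ∀ x : V → ℝ, QD x = ∑ v, d v * x v ^ 2)
    (f : V → ℝ) (hf_nonneg : ∀ v, 0 ≤ f v) (hf_ne : f ≠ (fun _ => (0:ℝ))) :
    QL f / QD f ≥
      ((1/2) * ∑ u, ∑ v, w u v * |f u ^ 2 - f v ^ 2|)^2 / (2 * (QD f)^2) :=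
  rayleigh_cauchy_schwarz_lower_general w hw_symm hw_nonneg d hd QL QD hQL hQD f
end

section
/- Let 0 < μ ≤ 1/2, let g : V → ℝ be feasible for the spectral program for μ, and fix an enumeration v_1,…,v_n of V with g(v_1) ≥ … ≥ g(v_n). Let S_j = {v_1,…,v_j}, let h be the largest index with Vol(S_h) ≤ Vol(G)/2, let z be the largest index with g(v_z) > 0, and let g_+(v) = max(g(v),0). If h ≥ z, then Q_L(g_+)/Q_D(g_+) ≥ (1/2)·( (μ²/(1−μ)²)·φ_μ(G) + ((1−2μ)/(1−μ)²)·φ_0(G) )². -/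
/-
The sweep sets `S₁ ⊆ ⋯ ⊆ S_z` of `g` give a layer-cake decomposition of `g₊²`, and
by the co-area formula the edge variation `∑ w(u,v) |g₊(u)² - g₊(v)²|` is twice the same
combination of their cuts. As `z ≤ h`, all these sets have volume at most `Vol(G)/2`, so each cut
is at least `φ₀` times the volume. The top set `S_z = {g > 0}` also has volume at least
`μ Vol(G)`, because `g` is orthogonal to the degrees and `√(μ/((1-μ)Vol)) ≤ |g| ≤ √((1-μ)/(μ Vol))`;
so its cut is at least `φ_μ` times its volume, and the bottom layer of `g₊²` carries at least the
fraction `μ²/(1-μ)²` of `Q_D(g₊)`. This bounds the edge variation below by `2C Q_D(g₊)` with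
`C = φ₀ + (φ_μ - φ₀) μ²/(1-μ)²`, and Cauchy–Schwarz,
`(∑ w |g₊(u)² - g₊(v)²|)² ≤ 2 Q_L(g₊) ⋅ 4 Q_D(g₊)`, turns this into `Q_L(g₊)/Q_D(g₊) ≥ C²/2`.
-/

open Finset

theorem sum_range_sub_succ_mul_ite_le {a : ℕ → ℝ} {N : ℕ} (ha : ∀ i, N ≤ i → a i = 0) (i : ℕ) :
    ∑ k ∈ range N, (a k - a (k + 1)) * (if i ≤ k then 1 else 0) = a i := by
  simp only [mul_ite, mul_one, mul_zero, ← sum_filter]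
  rcases le_or_gt N i with hNi | hiN
  · rw [ha i hNi, sum_eq_zero fun k hk => ?_]
    simp only [mem_filter, mem_range] at hk
    omega
  · have hIco : (range N).filter (fun k => i ≤ k) = Ico i N := by
      ext k
      simp only [mem_filter, mem_range, mem_Ico]
      omega
    have htel := sum_Ico_sub a hiN.le
    rw [ha N le_rfl, zero_sub] at htel
    rw [hIco, ← neg_neg (a i), ← htel, ← sum_neg_distrib]
    simp only [neg_sub]

section Indicator

variable {V : Type*}

theorem forall_imp_or_forall_imp_of_monotone {ι : Type*} [LinearOrder ι] {A : ι → Finset V}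
    (hA : Monotone A) (u v : V) :
    (∀ k, v ∈ A k → u ∈ A k) ∨ ∀ k, u ∈ A k → v ∈ A k := by
  by_contra! h
  obtain ⟨⟨k, hvk, huk⟩, ⟨l, hul, hvl⟩⟩ := h
  rcases le_total k l with hkl | hlk
  · exact hvl (hA hkl hvk)
  · exact huk (hA hlk hul)

variable [DecidableEq V] {ι : Type*} {A : ι → Finset V} {s : Finset ι} {c : ι → ℝ}

theorem abs_sum_mul_indicator_sub_of_forall_imp (hc : ∀ k ∈ s, 0 ≤ c k) {u v : V}
    (huv : ∀ k ∈ s, v ∈ A k → u ∈ A k) :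
    |(∑ k ∈ s, c k * if u ∈ A k then 1 else 0) - ∑ k ∈ s, c k * if v ∈ A k then 1 else 0| =
      ∑ k ∈ s, c k * |(if u ∈ A k then 1 else 0) - if v ∈ A k then 1 else 0| := by
  have hterm : ∀ k ∈ s, 0 ≤ (if u ∈ A k then 1 else 0) - (if v ∈ A k then 1 else 0 : ℝ) := by
    intro k hk
    by_cases hv : v ∈ A k
    · simp [hv, huv k hk hv]
    · by_cases hu : u ∈ A k <;> simp [hu, hv]
  simp only [← sum_sub_distrib, ← mul_sub]
  rw [abs_of_nonneg (sum_nonneg fun k hk => mul_nonneg (hc k hk) (hterm k hk))]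
  exact sum_congr rfl fun k hk => by rw [abs_of_nonneg (hterm k hk)]

theorem abs_sum_mul_indicator_sub_of_monotone [LinearOrder ι] (hA : Monotone A)
    (hc : ∀ k ∈ s, 0 ≤ c k) (u v : V) :
    |(∑ k ∈ s, c k * if u ∈ A k then 1 else 0) - ∑ k ∈ s, c k * if v ∈ A k then 1 else 0| =
      ∑ k ∈ s, c k * |(if u ∈ A k then 1 else 0) - if v ∈ A k then 1 else 0| := by
  rcases forall_imp_or_forall_imp_of_monotone hA u v with huv | hvu
  · exact abs_sum_mul_indicator_sub_of_forall_imp hc fun k _ => huv k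
  · rw [abs_sub_comm, abs_sum_mul_indicator_sub_of_forall_imp hc fun k _ => hvu k]
    exact sum_congr rfl fun k _ => by rw [abs_sub_comm]

end Indicator

section Enumeration

variable {V : Type*} {n : ℕ} (e : Fin n ≃ V)

def enumSeq (x : V → ℝ) (k : ℕ) : ℝ := if h : k < n then x (e ⟨k, h⟩) else 0

theorem enumSeq_symm_apply (x : V → ℝ) (v : V) : enumSeq e x (e.symm v) = x v := by
  simp [enumSeq]

theorem enumSeq_of_lt (x : V → ℝ) {k : ℕ} (hk : k < n) : enumSeq e x k = x (e ⟨k, hk⟩) :=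
  dif_pos hk

theorem enumSeq_eq_zero {x : V → ℝ} {N : ℕ} (hN : ∀ i : Fin n, N ≤ i → x (e i) = 0) {k : ℕ}
    (hk : N ≤ k) : enumSeq e x k = 0 := by
  unfold enumSeq
  split_ifs
  · exact hN _ hk
  · rfl

theorem enumSeq_antitone {x : V → ℝ} (hx0 : ∀ v, 0 ≤ x v)
    (hx : ∀ i j : Fin n, i ≤ j → x (e j) ≤ x (e i)) : Antitone (enumSeq e x) := by
  intro i j hij
  by_cases hj : j < n
  · rw [enumSeq_of_lt e x hj, enumSeq_of_lt e x (hij.trans_lt hj)]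
    exact hx ⟨i, _⟩ ⟨j, hj⟩ hij
  · rw [enumSeq, dif_neg hj, enumSeq]
    split_ifs
    exacts [hx0 _, le_rfl]

variable [DecidableEq V]

def sweepSet (t : ℕ) : Finset V := (univ.filter fun i : Fin n => (i : ℕ) < t).image e

theorem mem_sweepSet {t : ℕ} {v : V} : v ∈ sweepSet e t ↔ (e.symm v : ℕ) < t := by
  simp only [sweepSet, mem_image, mem_filter, mem_univ, true_and]
  exact ⟨fun ⟨i, hi, hiv⟩ => hiv ▸ by simpa using hi, fun h => ⟨_, h, e.apply_symm_apply v⟩⟩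

theorem sweepSet_zero : sweepSet e 0 = ∅ := by
  ext v
  simp [mem_sweepSet]

theorem sweepSet_mono : Monotone (sweepSet e) := fun _ _ hst _ hv =>
  (mem_sweepSet e).2 (((mem_sweepSet e).1 hv).trans_le hst)

theorem sweepSet_eq_filter_pos [Fintype V] {x : V → ℝ} {z : ℕ}
    (hpos : ∀ i : Fin n, (i : ℕ) < z → 0 < x (e i)) (hnonpos : ∀ i : Fin n, z ≤ i → x (e i) ≤ 0) :
    sweepSet e z = univ.filter (0 < x ·) := by
  ext v
  obtain ⟨i, rfl⟩ := e.surjective v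
  rw [mem_sweepSet, mem_filter, Equiv.symm_apply_apply]
  refine ⟨fun hi => ⟨mem_univ _, hpos i hi⟩, fun hi => ?_⟩
  by_contra hz
  exact (hnonpos i (not_lt.1 hz)).not_gt hi.2

theorem layercake_sweepSet {x : V → ℝ} {N : ℕ} (hN : ∀ i : Fin n, N ≤ i → x (e i) = 0) (v : V) :
    x v = ∑ k ∈ range N, (enumSeq e x k - enumSeq e x (k + 1)) *
      if v ∈ sweepSet e (k + 1) then 1 else 0 := by
  simp only [mem_sweepSet, Nat.lt_succ_iff]
  rw [sum_range_sub_succ_mul_ite_le fun i => enumSeq_eq_zero e hN, enumSeq_symm_apply]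

end Enumeration

theorem mul_sqrt_div_eq_mul_sqrt_div {μ a : ℝ} (hμ0 : 0 < μ) (hμ1 : μ < 1) :
    μ * √((1 - μ) / (μ * a)) = (1 - μ) * √(μ / ((1 - μ) * a)) := by
  have h1μ : 0 < 1 - μ := by linarith
  calc μ * √((1 - μ) / (μ * a)) = √(μ ^ 2 * ((1 - μ) / (μ * a))) := by
        rw [Real.sqrt_mul (sq_nonneg _), Real.sqrt_sq hμ0.le]
    _ = √((1 - μ) ^ 2 * (μ / ((1 - μ) * a))) := by
        congr 1
        field_simp
    _ = (1 - μ) * √(μ / ((1 - μ) * a)) := by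
        rw [Real.sqrt_mul (sq_nonneg _), Real.sqrt_sq h1μ.le]

namespace WeightedGraph

section Volume

variable {V : Type*} {d : V → ℝ}

def vol (d : V → ℝ) (A : Finset V) : ℝ := ∑ v ∈ A, d v

theorem vol_nonneg (hd : ∀ v, 0 ≤ d v) (A : Finset V) : 0 ≤ vol d A :=
  sum_nonneg fun v _ => hd v

theorem vol_pos (hd : ∀ v, 0 < d v) {A : Finset V} (hA : A.Nonempty) : 0 < vol d A :=
  sum_pos (fun v _ => hd v) hA

theorem vol_mono (hd : ∀ v, 0 ≤ d v) {A B : Finset V} (hAB : A ⊆ B) : vol d A ≤ vol d B :=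
  sum_le_sum_of_subset_of_nonneg hAB fun v _ _ => hd v

theorem nonempty_and_ne_univ_of_vol [Fintype V] {A : Finset V} (hA : 0 < vol d A)
    (hA' : vol d A < vol d univ) : A.Nonempty ∧ A ≠ univ := by
  refine ⟨nonempty_iff_ne_empty.2 ?_, ?_⟩ <;> rintro rfl
  · simp [vol] at hA
  · exact lt_irrefl _ hA'

end Volume

section Rayleigh

variable {V : Type*} [Fintype V] {w : V → V → ℝ} {d : V → ℝ} {μ : ℝ}

theorem sq_sum_sum_mul_abs_sq_sub_sq_le (hw0 : ∀ u v, 0 ≤ w u v) (f : V → ℝ) :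
    (∑ u, ∑ v, w u v * |f u ^ 2 - f v ^ 2|) ^ 2 ≤
      (∑ u, ∑ v, w u v * (f u - f v) ^ 2) * ∑ u, ∑ v, w u v * (f u + f v) ^ 2 := by
  simp only [← Fintype.sum_prod_type']
  refine sum_sq_le_sum_mul_sum_of_sq_le_mul _ (fun p _ => mul_nonneg (hw0 _ _) (sq_nonneg _))
    (fun p _ => mul_nonneg (hw0 _ _) (sq_nonneg _)) fun p _ => le_of_eq ?_
  rw [mul_pow, sq_abs]
  ring

theorem sum_sum_mul_add_sq_le (hw0 : ∀ u v, 0 ≤ w u v) (hw : ∀ u v, w u v = w v u)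
    (hd : ∀ v, d v = ∑ u, w v u) (f : V → ℝ) :
    ∑ u, ∑ v, w u v * (f u + f v) ^ 2 ≤ 4 * ∑ v, d v * f v ^ 2 := by
  calc ∑ u, ∑ v, w u v * (f u + f v) ^ 2
      ≤ ∑ u, ∑ v, (2 * (w u v * f u ^ 2) + 2 * (w v u * f v ^ 2)) := by
        gcongr with u _ v _
        rw [← hw u v]
        nlinarith [mul_nonneg (hw0 u v) (sq_nonneg (f u - f v))]
    _ = 4 * ∑ v, d v * f v ^ 2 := by
        simp only [sum_add_distrib, ← mul_sum]
        rw [sum_comm (f := fun u v => w v u * f v ^ 2)]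
        simp only [← sum_mul, ← hd]
        ring

theorem half_sq_le_rayleigh_of_two_mul_le (hw0 : ∀ u v, 0 ≤ w u v) (hw : ∀ u v, w u v = w v u)
    (hd : ∀ v, d v = ∑ u, w v u) {f : V → ℝ} (hf : 0 < ∑ v, d v * f v ^ 2) {C : ℝ} (hC : 0 ≤ C)
    (h : 2 * C * ∑ v, d v * f v ^ 2 ≤ ∑ u, ∑ v, w u v * |f u ^ 2 - f v ^ 2|) :
    1 / 2 * C ^ 2 ≤ (1 / 2 * ∑ u, ∑ v, w u v * (f u - f v) ^ 2) / ∑ v, d v * f v ^ 2 := by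
  set Q := ∑ v, d v * f v ^ 2
  set L := ∑ u, ∑ v, w u v * (f u - f v) ^ 2
  have hCS : (2 * C * Q) ^ 2 ≤ L * (4 * Q) :=
    calc (2 * C * Q) ^ 2 ≤ (∑ u, ∑ v, w u v * |f u ^ 2 - f v ^ 2|) ^ 2 := by gcongr
      _ ≤ L * ∑ u, ∑ v, w u v * (f u + f v) ^ 2 := sq_sum_sum_mul_abs_sq_sub_sq_le hw0 f
      _ ≤ L * (4 * Q) := by
        gcongr
        · exact sum_nonneg fun u _ => sum_nonneg fun v _ => mul_nonneg (hw0 u v) (sq_nonneg _)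
        · exact sum_sum_mul_add_sq_le hw0 hw hd f
  rw [le_div_iff₀ hf]
  nlinarith

theorem sum_mul_max_sq_le (hd : ∀ v, 0 ≤ d v) {g : V → ℝ} {M : ℝ} (hM : ∀ v, g v ≤ M) :
    ∑ v, d v * max (g v) 0 ^ 2 ≤ M ^ 2 * vol d (univ.filter (0 < g ·)) := by
  rw [← sum_filter_of_ne (p := (0 < g ·)) fun v _ hv => ?_, vol, mul_sum]
  · refine sum_le_sum fun v hv => ?_
    have hgv := (mem_filter.1 hv).2
    rw [max_eq_left hgv.le, mul_comm]
    exact mul_le_mul_of_nonneg_right (pow_le_pow_left₀ hgv.le (hM v) 2) (hd v)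
  · by_contra hgv
    simp [max_eq_right (not_lt.1 hgv)] at hv

theorem sq_div_sq_mul_sum_mul_sq_le {g : V → ℝ} (hd : ∀ v, 0 ≤ d v) (hμ0 : 0 < μ) (hμ1 : μ < 1)
    (hg_bounds : ∀ v, √(μ / ((1 - μ) * vol d univ)) ≤ |g v| ∧
      |g v| ≤ √((1 - μ) / (μ * vol d univ))) {v : V} (hv : 0 < g v) :
    μ ^ 2 / (1 - μ) ^ 2 * ∑ u, d u * max (g u) 0 ^ 2 ≤
      max (g v) 0 ^ 2 * vol d (univ.filter (0 < g ·)) := by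
  set m := √(μ / ((1 - μ) * vol d univ))
  set M := √((1 - μ) / (μ * vol d univ))
  have hmM : μ ^ 2 / (1 - μ) ^ 2 * M ^ 2 = m ^ 2 := by
    have h1μ : 1 - μ ≠ 0 := by linarith
    have hmM' : μ * M = (1 - μ) * m := mul_sqrt_div_eq_mul_sqrt_div hμ0 hμ1
    rw [div_mul_eq_mul_div, ← mul_pow, hmM']
    field_simp
  have hmass := sum_mul_max_sq_le hd fun u => (le_abs_self _).trans (hg_bounds u).2
  have hmv : m ≤ max (g v) 0 := le_max_of_le_left (abs_of_pos hv ▸ (hg_bounds v).1)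
  calc μ ^ 2 / (1 - μ) ^ 2 * ∑ u, d u * max (g u) 0 ^ 2
      ≤ μ ^ 2 / (1 - μ) ^ 2 * (M ^ 2 * vol d (univ.filter (0 < g ·))) := by gcongr
    _ = m ^ 2 * vol d (univ.filter (0 < g ·)) := by rw [← mul_assoc, hmM]
    _ ≤ max (g v) 0 ^ 2 * vol d (univ.filter (0 < g ·)) := by
        gcongr
        exact vol_nonneg hd _

end Rayleigh

variable {V : Type*} [Fintype V] [DecidableEq V] {w : V → V → ℝ} {d : V → ℝ} {μ : ℝ}

def cut (w : V → V → ℝ) (A : Finset V) : ℝ := ∑ u ∈ A, ∑ v ∈ Aᶜ, w u v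

theorem vol_compl (A : Finset V) : vol d Aᶜ = vol d univ - vol d A := by
  rw [vol, vol, vol, ← sum_compl_add_sum A]
  ring

theorem cut_nonneg (hw0 : ∀ u v, 0 ≤ w u v) (A : Finset V) : 0 ≤ cut w A :=
  sum_nonneg fun u _ => sum_nonneg fun v _ => hw0 u v

theorem sum_sum_mul_abs_indicator_sub (hw : ∀ u v, w u v = w v u) (A : Finset V) :
    ∑ u, ∑ v, w u v * |(if u ∈ A then 1 else 0) - (if v ∈ A then 1 else 0 : ℝ)| =
      2 * cut w A := by
  have hsplit : ∀ u v, w u v * |(if u ∈ A then 1 else 0) - (if v ∈ A then 1 else 0 : ℝ)| =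
      (if u ∈ A then if v ∈ Aᶜ then w u v else 0 else 0) +
        (if v ∈ A then if u ∈ Aᶜ then w v u else 0 else 0) := by
    intro u v
    by_cases hu : u ∈ A <;> by_cases hv : v ∈ A <;> simp [hu, hv, hw u v]
  simp only [hsplit, sum_add_distrib]
  rw [sum_comm (f := fun u v => if v ∈ A then if u ∈ Aᶜ then w v u else 0 else 0)]
  simp only [← ite_sum_zero, sum_ite_mem, univ_inter, cut]
  ring

theorem coarea_of_monotone (hw : ∀ u v, w u v = w v u) {ι : Type*}
    [LinearOrder ι] {A : ι → Finset V} (hA : Monotone A) {s : Finset ι} {c : ι → ℝ}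
    (hc : ∀ k ∈ s, 0 ≤ c k) {x : V → ℝ}
    (hx : ∀ v, x v = ∑ k ∈ s, c k * if v ∈ A k then 1 else 0) :
    ∑ u, ∑ v, w u v * |x u - x v| = 2 * ∑ k ∈ s, c k * cut w (A k) := by
  calc ∑ u, ∑ v, w u v * |x u - x v|
      = ∑ u, ∑ v, ∑ k ∈ s,
          c k * (w u v * |(if u ∈ A k then 1 else 0) - if v ∈ A k then 1 else 0|) := by
        simp only [hx, abs_sum_mul_indicator_sub_of_monotone hA hc, mul_sum, mul_left_comm]
    _ = ∑ k ∈ s, c k * ∑ u, ∑ v,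
          w u v * |(if u ∈ A k then 1 else 0) - if v ∈ A k then 1 else 0| := by
        simp only [mul_sum]
        rw [sum_congr rfl fun u _ => sum_comm, sum_comm]
    _ = 2 * ∑ k ∈ s, c k * cut w (A k) := by
        simp only [sum_sum_mul_abs_indicator_sub hw, mul_sum, mul_left_comm]

theorem sum_mul_eq_sum_mul_vol {ι : Type*} {A : ι → Finset V} {s : Finset ι} {c : ι → ℝ}
    {x : V → ℝ} (hx : ∀ v, x v = ∑ k ∈ s, c k * if v ∈ A k then 1 else 0) :
    ∑ v, d v * x v = ∑ k ∈ s, c k * vol d (A k) := by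
  simp only [hx, mul_sum, vol]
  rw [sum_comm]
  refine sum_congr rfl fun k _ => ?_
  simp [mul_comm]

/-- `x (e ⟨N, hNn⟩) * vol d (sweepSet e (N + 1))` is the mass of the bottom layer of `x`, the only
layer whose cut is bounded with the stronger constant `φ'`. -/
theorem two_mul_le_sum_sum_mul_abs_sub_of_sweep (hw : ∀ u v, w u v = w v u) {n : ℕ}
    (e : Fin n ≃ V) {x : V → ℝ} (hx0 : ∀ v, 0 ≤ x v)
    (hx : ∀ i j : Fin n, i ≤ j → x (e j) ≤ x (e i))
    {N : ℕ} (hNn : N < n) (hN : ∀ i : Fin n, N < i → x (e i) = 0) {φ φ' ρ : ℝ} (hφ : φ ≤ φ')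
    (hcut : ∀ k < N, φ * vol d (sweepSet e (k + 1)) ≤ cut w (sweepSet e (k + 1)))
    (hlast : φ' * vol d (sweepSet e (N + 1)) ≤ cut w (sweepSet e (N + 1)))
    (hρ : ρ * ∑ v, d v * x v ≤ x (e ⟨N, hNn⟩) * vol d (sweepSet e (N + 1))) :
    2 * (φ + (φ' - φ) * ρ) * ∑ v, d v * x v ≤ ∑ u, ∑ v, w u v * |x u - x v| := by
  set c : ℕ → ℝ := fun k => enumSeq e x k - enumSeq e x (k + 1)
  have hc : ∀ k ∈ range (N + 1), 0 ≤ c k := fun k _ =>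
    sub_nonneg.2 (enumSeq_antitone e hx0 hx k.le_succ)
  have hcN : c N = x (e ⟨N, hNn⟩) := by
    simp only [c, enumSeq_of_lt e x hNn,
      enumSeq_eq_zero e (N := N + 1) hN le_rfl, sub_zero]
  have hlayer := layercake_sweepSet e (N := N + 1) hN
  have hQ := sum_mul_eq_sum_mul_vol (d := d) hlayer
  rw [coarea_of_monotone hw (fun _ _ hkl => sweepSet_mono e (by omega)) hc hlayer]
  rw [sum_range_succ] at hQ ⊢
  have hbulk : φ * ∑ k ∈ range N, c k * vol d (sweepSet e (k + 1)) ≤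
      ∑ k ∈ range N, c k * cut w (sweepSet e (k + 1)) := by
    rw [mul_sum]
    refine sum_le_sum fun k hk => ?_
    have hk' := mem_range.1 hk
    rw [mul_left_comm]
    exact mul_le_mul_of_nonneg_left (hcut k hk') (hc k (mem_range.2 (by omega)))
  have htop := mul_le_mul_of_nonneg_left hlast (hc N (self_mem_range_succ N))
  have hslack := mul_le_mul_of_nonneg_left hρ (sub_nonneg.2 hφ)
  rw [← hcN, hQ] at hslack
  rw [hQ]
  linarith

theorem mul_vol_le_vol_pos_of_sum_mul_eq_zero (hd : ∀ v, 0 ≤ d v) {x : V → ℝ}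
    (hx : ∑ v, d v * x v = 0) {m M : ℝ} (hM : ∀ v, x v ≤ M) (hm : ∀ v, x v ≤ 0 → x v ≤ -m) :
    m * vol d univ ≤ (m + M) * vol d (univ.filter (0 < x ·)) := by
  set P := univ.filter (0 < x ·)
  have hP : ∑ v ∈ P, d v * x v ≤ M * vol d P := by
    rw [vol, mul_sum]
    exact sum_le_sum fun v _ => by nlinarith [hd v, hM v]
  have hPc : ∑ v ∈ Pᶜ, d v * x v ≤ -m * vol d Pᶜ := by
    rw [vol, mul_sum]
    refine sum_le_sum fun v hv => ?_
    have : x v ≤ 0 := by simpa [P] using hv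
    nlinarith [hd v, hm v this]
  rw [vol_compl] at hPc
  linarith [sum_add_sum_compl P (fun v => d v * x v)]

theorem mul_vol_le_vol_pos_of_feasible [Nonempty V] (hd : ∀ v, 0 < d v) (hμ0 : 0 < μ)
    (hμ1 : μ < 1) {g : V → ℝ} (hg_sum : ∑ v, d v * g v = 0)
    (hg_bounds : ∀ v, √(μ / ((1 - μ) * vol d univ)) ≤ |g v| ∧
      |g v| ≤ √((1 - μ) / (μ * vol d univ))) :
    μ * vol d univ ≤ vol d (univ.filter (0 < g ·)) := by
  have hV := vol_pos hd (univ_nonempty (α := V))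
  set m := √(μ / ((1 - μ) * vol d univ))
  set M := √((1 - μ) / (μ * vol d univ))
  have hm : 0 < m := Real.sqrt_pos.2 (div_pos hμ0 (mul_pos (by linarith) hV))
  have hmM : μ * M = (1 - μ) * m := mul_sqrt_div_eq_mul_sqrt_div hμ0 hμ1
  have key := mul_vol_le_vol_pos_of_sum_mul_eq_zero (m := m) (M := M) (fun v => (hd v).le)
    hg_sum (fun v => (le_abs_self _).trans (hg_bounds v).2) fun v hv => by
      linarith [abs_of_nonpos hv ▸ (hg_bounds v).1]
  refine le_of_mul_le_mul_left ?_ hm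
  calc m * (μ * vol d univ) = μ * (m * vol d univ) := by ring
    _ ≤ μ * ((m + M) * vol d (univ.filter (0 < g ·))) := by gcongr
    _ = m * vol d (univ.filter (0 < g ·)) := by
        linear_combination vol d (univ.filter (0 < g ·)) * hmM

theorem mul_vol_le_cut_of_le_div {φ : ℝ} {A : Finset V} (hA : 0 < vol d A)
    (hA' : vol d A ≤ vol d univ / 2) (h : φ ≤ cut w A / min (vol d A) (vol d Aᶜ)) :
    φ * vol d A ≤ cut w A := by
  rwa [min_eq_left (by rw [vol_compl]; linarith), le_div_iff₀ hA] at h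

theorem isLeast_conductance_nonneg (hw0 : ∀ u v, 0 ≤ w u v) (hd : ∀ v, 0 ≤ d v) {φ : ℝ}
    (hφ : IsLeast {y | ∃ A : Finset V, A.Nonempty ∧ A ≠ univ ∧
      y = cut w A / min (vol d A) (vol d Aᶜ)} φ) : 0 ≤ φ := by
  obtain ⟨A, -, -, rfl⟩ := hφ.1
  exact div_nonneg (cut_nonneg hw0 A) (le_min (vol_nonneg hd A) (vol_nonneg hd Aᶜ))

theorem mul_vol_le_cut_of_isLeast (hd : ∀ v, 0 < d v) {φ : ℝ}
    (hφ : IsLeast {y | ∃ A : Finset V, A.Nonempty ∧ A ≠ univ ∧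
      y = cut w A / min (vol d A) (vol d Aᶜ)} φ)
    {A : Finset V} (hA : vol d A ≤ vol d univ / 2) : φ * vol d A ≤ cut w A := by
  rcases A.eq_empty_or_nonempty with rfl | hne
  · simp [vol, cut]
  have hApos := vol_pos hd hne
  refine mul_vol_le_cut_of_le_div hApos hA (hφ.2 ⟨A, hne, ?_, rfl⟩)
  rintro rfl
  linarith

theorem mul_vol_le_cut_of_isLeast_balanced [Nonempty V] (hd : ∀ v, 0 < d v) (hμ0 : 0 < μ)
    {φ : ℝ}
    (hφ : IsLeast {y | ∃ A : Finset V, μ * vol d univ ≤ vol d A ∧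
      vol d A ≤ (1 - μ) * vol d univ ∧ y = cut w A / min (vol d A) (vol d Aᶜ)} φ)
    {A : Finset V} (hlo : μ * vol d univ ≤ vol d A) (hhi : vol d A ≤ vol d univ / 2) :
    φ * vol d A ≤ cut w A := by
  have hV := vol_pos hd (univ_nonempty (α := V))
  exact mul_vol_le_cut_of_le_div (by nlinarith) hhi (hφ.2 ⟨A, hlo, by nlinarith, rfl⟩)

theorem isLeast_conductance_le_isLeast_balanced [Nonempty V] (hd : ∀ v, 0 < d v)
    (hμ0 : 0 < μ) {φ φ' : ℝ}
    (hφ : IsLeast {y | ∃ A : Finset V, A.Nonempty ∧ A ≠ univ ∧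
      y = cut w A / min (vol d A) (vol d Aᶜ)} φ)
    (hφ' : IsLeast {y | ∃ A : Finset V, μ * vol d univ ≤ vol d A ∧
      vol d A ≤ (1 - μ) * vol d univ ∧ y = cut w A / min (vol d A) (vol d Aᶜ)} φ') :
    φ ≤ φ' := by
  obtain ⟨A, hlo, hhi, rfl⟩ := hφ'.1
  have hV := vol_pos hd (univ_nonempty (α := V))
  obtain ⟨hne, hne'⟩ := nonempty_and_ne_univ_of_vol (by nlinarith) (by nlinarith)
  exact hφ.2 ⟨A, hne, hne', rfl⟩

theorem half_sq_le_rayleigh_pos_part [Nonempty V] (hw0 : ∀ u v, 0 ≤ w u v)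
    (hw : ∀ u v, w u v = w v u) (hd : ∀ v, d v = ∑ u, w v u) (hd_pos : ∀ v, 0 < d v)
    (hμ0 : 0 < μ) (hμhalf : μ ≤ 1 / 2) {φ φ' : ℝ} (hφ0 : 0 ≤ φ) (hφφ' : φ ≤ φ')
    (hφ : ∀ A, vol d A ≤ vol d univ / 2 → φ * vol d A ≤ cut w A)
    (hφ' : ∀ A, μ * vol d univ ≤ vol d A → vol d A ≤ vol d univ / 2 → φ' * vol d A ≤ cut w A)
    {n : ℕ} (e : Fin n ≃ V) {g : V → ℝ} (hg_sum : ∑ v, d v * g v = 0)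
    (hg_bounds : ∀ v, √(μ / ((1 - μ) * vol d univ)) ≤ |g v| ∧
      |g v| ≤ √((1 - μ) / (μ * vol d univ)))
    (hg_sorted : ∀ i j : Fin n, i ≤ j → g (e j) ≤ g (e i)) {z : ℕ} (hz_le : z ≤ n)
    (hz1 : ∀ i : Fin n, (i : ℕ) < z → 0 < g (e i)) (hz2 : ∀ i : Fin n, z ≤ (i : ℕ) → g (e i) ≤ 0)
    (hz_half : vol d (sweepSet e z) ≤ vol d univ / 2) :
    1 / 2 * (μ ^ 2 / (1 - μ) ^ 2 * φ' + (1 - 2 * μ) / (1 - μ) ^ 2 * φ) ^ 2 ≤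
      (1 / 2 * ∑ u, ∑ v, w u v * (max (g u) 0 - max (g v) 0) ^ 2) /
        ∑ v, d v * max (g v) 0 ^ 2 := by
  have hμ1 : μ < 1 := by linarith
  have hd0 : ∀ v, 0 ≤ d v := fun v => (hd_pos v).le
  have hP := sweepSet_eq_filter_pos e hz1 hz2
  have hlo : μ * vol d univ ≤ vol d (sweepSet e z) :=
    hP ▸ mul_vol_le_vol_pos_of_feasible hd_pos hμ0 hμ1 hg_sum hg_bounds
  have hPpos : 0 < vol d (sweepSet e z) :=
    (mul_pos hμ0 (vol_pos hd_pos univ_nonempty)).trans_le hlo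
  obtain ⟨N, rfl⟩ : ∃ N, z = N + 1 := Nat.exists_eq_add_one.2 <| Nat.pos_of_ne_zero <| by
    rintro rfl
    simp [sweepSet_zero, vol] at hPpos
  have hNn : N < n := hz_le
  have hgN : 0 < g (e ⟨N, hNn⟩) := hz1 _ N.lt_succ_self
  have hsweep := two_mul_le_sum_sum_mul_abs_sub_of_sweep hw e (x := fun v => max (g v) 0 ^ 2)
    (fun v => by positivity) (fun i j hij =>
      pow_le_pow_left₀ (le_max_right _ _) (max_le_max_right 0 (hg_sorted i j hij)) 2)
    hNn (fun i hi => by simp [max_eq_right (hz2 i hi)]) hφφ'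
    (fun k hk => hφ _ ((vol_mono hd0 (sweepSet_mono e (by omega))).trans hz_half))
    (hφ' _ hlo hz_half) (hP ▸ sq_div_sq_mul_sum_mul_sq_le hd0 hμ0 hμ1 hg_bounds hgN)
  have hQ : 0 < ∑ v, d v * max (g v) 0 ^ 2 :=
    sum_pos' (fun v _ => mul_nonneg (hd0 v) (sq_nonneg _))
      ⟨_, mem_univ _, mul_pos (hd_pos _) (pow_pos (lt_max_of_lt_left hgN) 2)⟩
  have hC : 0 ≤ φ + (φ' - φ) * (μ ^ 2 / (1 - μ) ^ 2) :=
    add_nonneg hφ0 (mul_nonneg (sub_nonneg.2 hφφ') (by positivity))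
  convert half_sq_le_rayleigh_of_two_mul_le hw0 hw hd hQ hC hsweep using 3
  have : 1 - μ ≠ 0 := by linarith
  field_simp
  ring

end WeightedGraph

theorem sweep_case_h_ge_z_general {V : Type*} [Fintype V] [DecidableEq V] [Nonempty V]
    (w : V → V → ℝ)
    (hw_symm : ∀ u v, w u v = w v u)
    (hw_nonneg : ∀ u v, 0 ≤ w u v)
    (d : V → ℝ) (hd : ∀ v, d v = ∑ u, w v u)
    (hd_pos : ∀ v, 0 < d v)
    (vol : Finset V → ℝ) (hvol : ∀ S : Finset V, vol S = ∑ v ∈ S, d v)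
    (cut : Finset V → ℝ) (hcut : ∀ S : Finset V, cut S = ∑ u ∈ S, ∑ v ∈ Sᶜ, w u v)
    (phi : Finset V → ℝ) (hphi : ∀ S : Finset V, phi S = cut S / min (vol S) (vol Sᶜ))
    (QL QD : (V → ℝ) → ℝ)
    (hQL : ∀ x : V → ℝ, QL x = (1/2) * ∑ u, ∑ v, w u v * (x u - x v)^2)
    (hQD : ∀ x : V → ℝ, QD x = ∑ v, d v * x v ^ 2)
    (μ : ℝ) (hμ0 : 0 < μ) (hμhalf : μ ≤ 1/2)
    (phi0 : ℝ)
    (hphi0 : IsLeast {y : ℝ | ∃ S : Finset V, S.Nonempty ∧ S ≠ Finset.univ ∧ y = phi S} phi0)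
    (phimu : ℝ)
    (hphimu : IsLeast {y : ℝ | ∃ S : Finset V,
        μ * vol Finset.univ ≤ vol S ∧ vol S ≤ (1 - μ) * vol Finset.univ ∧ y = phi S} phimu)
    (n : ℕ) (e : Fin n ≃ V)
    (g : V → ℝ)
    (hg_sum : (∑ v, d v * g v) = 0)
    (hg_bounds : ∀ v, Real.sqrt (μ / ((1 - μ) * vol Finset.univ)) ≤ |g v| ∧
        |g v| ≤ Real.sqrt ((1 - μ) / (μ * vol Finset.univ)))
    (hg_sorted : ∀ i j : Fin n, i ≤ j → g (e j) ≤ g (e i))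
    (S : ℕ → Finset V)
    (hS : ∀ j : ℕ, S j = (Finset.univ.filter fun i : Fin n => (i : ℕ) < j).image e)
    (h : ℕ)
    (hh1 : vol (S h) ≤ vol Finset.univ / 2)
    (z : ℕ) (hz_le : z ≤ n)
    (hz1 : ∀ i : Fin n, (i : ℕ) < z → 0 < g (e i))
    (hz2 : ∀ i : Fin n, z ≤ (i : ℕ) → g (e i) ≤ 0)
    (hzh : z ≤ h) :
    QL (fun v => max (g v) 0) / QD (fun v => max (g v) 0) ≥
      (1/2) * ((μ^2 / (1 - μ)^2) * phimu + ((1 - 2*μ) / (1 - μ)^2) * phi0)^2 := by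
  obtain rfl : vol = WeightedGraph.vol d := funext hvol
  obtain rfl : cut = WeightedGraph.cut w := funext hcut
  obtain rfl : phi = fun A =>
      WeightedGraph.cut w A / min (WeightedGraph.vol d A) (WeightedGraph.vol d Aᶜ) := funext hphi
  obtain rfl : S = sweepSet e := funext hS
  have hd0 : ∀ v, 0 ≤ d v := fun v => (hd_pos v).le
  rw [ge_iff_le, hQL, hQD]
  exact WeightedGraph.half_sq_le_rayleigh_pos_part hw_nonneg hw_symm hd hd_pos hμ0 hμhalf
    (WeightedGraph.isLeast_conductance_nonneg hw_nonneg hd0 hphi0)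
    (WeightedGraph.isLeast_conductance_le_isLeast_balanced hd_pos hμ0 hphi0 hphimu)
    (fun _ => WeightedGraph.mul_vol_le_cut_of_isLeast hd_pos hphi0)
    (fun _ => WeightedGraph.mul_vol_le_cut_of_isLeast_balanced hd_pos hμ0 hphimu)
    e hg_sum hg_bounds hg_sorted hz_le hz1 hz2
    ((WeightedGraph.vol_mono hd0 (sweepSet_mono e hzh)).trans hh1)

theorem sweep_case_h_ge_z {V : Type*} [Fintype V] [DecidableEq V] [Nonempty V]
    (w : V → V → ℝ)
    (hw_symm : ∀ u v, w u v = w v u)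
    (hw_nonneg : ∀ u v, 0 ≤ w u v)
    (hw_loop : ∀ v, w v v = 0)
    (d : V → ℝ) (hd : ∀ v, d v = ∑ u, w v u)
    (hd_pos : ∀ v, 0 < d v)
    (vol : Finset V → ℝ) (hvol : ∀ S : Finset V, vol S = ∑ v ∈ S, d v)
    (cut : Finset V → ℝ) (hcut : ∀ S : Finset V, cut S = ∑ u ∈ S, ∑ v ∈ Sᶜ, w u v)
    (phi : Finset V → ℝ) (hphi : ∀ S : Finset V, phi S = cut S / min (vol S) (vol Sᶜ))
    (QL QD : (V → ℝ) → ℝ)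
    (hQL : ∀ x : V → ℝ, QL x = (1/2) * ∑ u, ∑ v, w u v * (x u - x v)^2)
    (hQD : ∀ x : V → ℝ, QD x = ∑ v, d v * x v ^ 2)
    (μ : ℝ) (hμ0 : 0 < μ) (hμhalf : μ ≤ 1/2)
    (phi0 : ℝ)
    (hphi0 : IsLeast {y : ℝ | ∃ S : Finset V, S.Nonempty ∧ S ≠ Finset.univ ∧ y = phi S} phi0)
    (phimu : ℝ)
    (hphimu : IsLeast {y : ℝ | ∃ S : Finset V,
        μ * vol Finset.univ ≤ vol S ∧ vol S ≤ (1 - μ) * vol Finset.univ ∧ y = phi S} phimu)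
    (n : ℕ) (hn : n = Fintype.card V) (e : Fin n ≃ V)
    (g : V → ℝ)
    (hg_sum : (∑ v, d v * g v) = 0)
    (hg_norm : QD g = 1)
    (hg_bounds : ∀ v, Real.sqrt (μ / ((1 - μ) * vol Finset.univ)) ≤ |g v| ∧
        |g v| ≤ Real.sqrt ((1 - μ) / (μ * vol Finset.univ)))
    (hg_sorted : ∀ i j : Fin n, i ≤ j → g (e j) ≤ g (e i))
    (S : ℕ → Finset V)
    (hS : ∀ j : ℕ, S j = (Finset.univ.filter fun i : Fin n => (i : ℕ) < j).image e)
    (h : ℕ) (hh_le : h ≤ n)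
    (hh1 : vol (S h) ≤ vol Finset.univ / 2)
    (hh2 : ∀ j : ℕ, j ≤ n → vol (S j) ≤ vol Finset.univ / 2 → j ≤ h)
    (z : ℕ) (hz_le : z ≤ n)
    (hz1 : ∀ i : Fin n, (i : ℕ) < z → 0 < g (e i))
    (hz2 : ∀ i : Fin n, z ≤ (i : ℕ) → g (e i) ≤ 0)
    (hzh : z ≤ h) :
    QL (fun v => max (g v) 0) / QD (fun v => max (g v) 0) ≥
      (1/2) * ((μ^2 / (1 - μ)^2) * phimu + ((1 - 2*μ) / (1 - μ)^2) * phi0)^2 :=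
  sweep_case_h_ge_z_general w hw_symm hw_nonneg d hd hd_pos vol hvol cut hcut phi hphi QL QD hQL hQD
    μ hμ0 hμhalf phi0 hphi0 phimu hphimu n e g hg_sum hg_bounds hg_sorted S hS h hh1 z hz_le hz1 hz2
    hzh
end
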